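/- For every nonnegative integer k, the two-variable identity 1/(z;q)_k = \sum_{j=0}^{k} z^j q^{j^2} [k choose j]_q * 1/(z;q)_j holds as an identity of formal power series, where (z;q)_k = \prod_{i=1}^{k}(1 - q^i z). -/

import Mathlib

/-!
Replacing `z` by `q^m z` gives the family
`1/(q^m z;q)_k = ∑_j z^j q^{mj+j²} [k choose j]_q 1/(q^m z;q)_j`, proved by induction on `k` for all
`m` at once. Peeling off the first factor,
`1/(q^m z;q)_{k+1} = (1 - q^{m+1} z)⁻¹ · 1/(q^{m+1} z;q)_k`; expanding the second factor by the
induction hypothesis, each term `(1 - q^{m+1} z)⁻¹ T_{m+1}(j)` splits as `q^j T_m(j) + T_m(j+1)`,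
and the q-Pascal rule `[k+1 choose j]_q = q^j [k choose j]_q + [k choose j-1]_q` collects the
coefficients of `T_m(j)`.
-/

open MvPowerSeries

/-- The variable `z` in `ℚ[[z,q]]`. -/
noncomputable def z : MvPowerSeries (Fin 2) ℚ := X 0
/-- The variable `q` in `ℚ[[z,q]]`. -/
noncomputable def q : MvPowerSeries (Fin 2) ℚ := X 1

/-- `(z;q)_k = (1-qz)(1-q²z)⋯(1-q^k z)`. -/
noncomputable def zqpoch (k : ℕ) : MvPowerSeries (Fin 2) ℚ :=
  ∏ i ∈ Finset.range k, (1 - q ^ (i + 1) * z)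

/-- `(q)_k = (1-q)(1-q²)⋯(1-q^k)`. -/
noncomputable def qpoch (k : ℕ) : MvPowerSeries (Fin 2) ℚ :=
  ∏ i ∈ Finset.range k, (1 - q ^ (i + 1))

/-- Gaussian binomial coefficient `[k choose j]_q`. -/
noncomputable def gauss (k j : ℕ) : MvPowerSeries (Fin 2) ℚ :=
  qpoch k * (qpoch j * qpoch (k - j))⁻¹

theorem Finset.sum_range_pascal_step {R : Type*} [CommRing R] (a : ℕ → R) (c : ℕ → ℕ → R)
    (T : ℕ → R) (k : ℕ) (hfirst : a 0 * c k 0 = c (k + 1) 0)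
    (hlast : c k k = c (k + 1) (k + 1))
    (hmid : ∀ j < k, a (j + 1) * c k (j + 1) + c k j = c (k + 1) (j + 1)) :
    ∑ j ∈ range (k + 1), c k j * (a j * T j + T (j + 1)) =
      ∑ j ∈ range (k + 2), c (k + 1) j * T j := by
  have hsplit (j : ℕ) :
      c k j * (a j * T j + T (j + 1)) = a j * c k j * T j + c k j * T (j + 1) := by ring
  simp only [hsplit, sum_add_distrib]
  rw [sum_range_succ' (fun j => a j * c k j * T j), sum_range_succ (fun j => c k j * T (j + 1)),
    sum_range_succ' _ (k + 1), sum_range_succ _ k, hfirst, hlast]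
  have hmid' : ∑ j ∈ range k, (a (j + 1) * c k (j + 1) * T (j + 1) + c k j * T (j + 1)) =
      ∑ j ∈ range k, c (k + 1) (j + 1) * T (j + 1) :=
    sum_congr rfl fun j hj => by rw [← hmid j (mem_range.mp hj)]; ring
  rw [← hmid', sum_add_distrib]
  ring

lemma constantCoeff_qpoch (k : ℕ) : constantCoeff (qpoch k) = 1 := by
  simp [qpoch, q]

lemma gauss_mul_qpoch_mul_qpoch (k j : ℕ) : gauss k j * (qpoch j * qpoch (k - j)) = qpoch k := by
  rw [gauss, mul_assoc, MvPowerSeries.inv_mul_cancel _ (by simp [constantCoeff_qpoch]), mul_one]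

lemma qpoch_zero : qpoch 0 = 1 := Finset.prod_range_zero _

lemma qpoch_succ (k : ℕ) : qpoch (k + 1) = qpoch k * (1 - q ^ (k + 1)) :=
  Finset.prod_range_succ _ k

lemma qpoch_mul_inv_cancel (k : ℕ) : qpoch k * (qpoch k)⁻¹ = 1 :=
  MvPowerSeries.mul_inv_cancel _ (by simp [constantCoeff_qpoch])

lemma gauss_zero_right (k : ℕ) : gauss k 0 = 1 := by
  rw [gauss, Nat.sub_zero, qpoch_zero, one_mul, qpoch_mul_inv_cancel]

lemma gauss_self (k : ℕ) : gauss k k = 1 := by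
  rw [gauss, Nat.sub_self, qpoch_zero, mul_one, qpoch_mul_inv_cancel]

lemma gauss_pascal (j b : ℕ) :
    q ^ (j + 1) * gauss (j + b + 1) (j + 1) + gauss (j + b + 1) j = gauss (j + b + 2) (j + 1) := by
  have hD : qpoch (j + 1) * qpoch (b + 1) ≠ 0 := fun h => by
    simpa [constantCoeff_qpoch] using congrArg constantCoeff h
  have hleft := gauss_mul_qpoch_mul_qpoch (j + b + 1) (j + 1)
  have hright := gauss_mul_qpoch_mul_qpoch (j + b + 1) j
  have htop := gauss_mul_qpoch_mul_qpoch (j + b + 2) (j + 1)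
  rw [show j + b + 1 - (j + 1) = b by omega] at hleft
  rw [show j + b + 1 - j = b + 1 by omega] at hright
  rw [show j + b + 2 - (j + 1) = b + 1 by omega, show qpoch (j + b + 2) = _ from
    qpoch_succ (j + b + 1)] at htop
  refine mul_right_cancel₀ hD ?_
  rw [qpoch_succ j] at hleft htop ⊢
  rw [qpoch_succ b] at hright htop ⊢
  linear_combination q ^ (j + 1) * (1 - q ^ (b + 1)) * hleft + (1 - q ^ (j + 1)) * hright - htop

lemma gauss_succ_succ {k j : ℕ} (hj : j < k) :
    q ^ (j + 1) * gauss k (j + 1) + gauss k j = gauss (k + 1) (j + 1) := by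
  obtain ⟨b, rfl⟩ : ∃ b, k = j + b + 1 := ⟨k - j - 1, by omega⟩
  exact gauss_pascal j b

/-- `(q^m z;q)_k = (1-q^{m+1}z)⋯(1-q^{m+k}z)`. -/
noncomputable def shiftedZqpoch (m k : ℕ) : MvPowerSeries (Fin 2) ℚ :=
  ∏ i ∈ Finset.range k, (1 - q ^ (m + i + 1) * z)

/-- The term `T_m(j) = z^j q^{mj+j²} / (q^m z;q)_j` of the shifted identity. -/
noncomputable def durfeeTerm (m j : ℕ) : MvPowerSeries (Fin 2) ℚ :=
  z ^ j * q ^ (m * j + j ^ 2) * (shiftedZqpoch m j)⁻¹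

lemma constantCoeff_one_sub_q_pow_mul_z (n : ℕ) : constantCoeff (1 - q ^ n * z) = 1 := by
  simp [z]

lemma shiftedZqpoch_zero_left (k : ℕ) : shiftedZqpoch 0 k = zqpoch k := by
  simp only [shiftedZqpoch, zqpoch, Nat.zero_add]

lemma shiftedZqpoch_zero_right (m : ℕ) : shiftedZqpoch m 0 = 1 := Finset.prod_range_zero _

lemma shiftedZqpoch_succ (m k : ℕ) :
    shiftedZqpoch m (k + 1) = shiftedZqpoch m k * (1 - q ^ (m + k + 1) * z) :=
  Finset.prod_range_succ _ k

lemma shiftedZqpoch_succ' (m k : ℕ) :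
    shiftedZqpoch m (k + 1) = (1 - q ^ (m + 1) * z) * shiftedZqpoch (m + 1) k := by
  rw [shiftedZqpoch, Finset.prod_range_succ', mul_comm, shiftedZqpoch, Nat.add_zero]
  refine congrArg _ (Finset.prod_congr rfl fun i _ => ?_)
  rw [add_right_comm m 1 i, add_assoc m i 1]

lemma inv_shiftedZqpoch_succ' (m k : ℕ) :
    (shiftedZqpoch m (k + 1))⁻¹ = (1 - q ^ (m + 1) * z)⁻¹ * (shiftedZqpoch (m + 1) k)⁻¹ := by
  rw [shiftedZqpoch_succ', MvPowerSeries.mul_inv_rev, mul_comm]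

lemma inv_shiftedZqpoch_eq_mul_inv_succ (m k : ℕ) :
    (shiftedZqpoch m k)⁻¹ = (1 - q ^ (m + k + 1) * z) * (shiftedZqpoch m (k + 1))⁻¹ := by
  rw [shiftedZqpoch_succ, MvPowerSeries.mul_inv_rev, ← mul_assoc,
    MvPowerSeries.mul_inv_cancel _ (by simp [constantCoeff_one_sub_q_pow_mul_z]), one_mul]

lemma inv_one_sub_mul_durfeeTerm (m j : ℕ) :
    (1 - q ^ (m + 1) * z)⁻¹ * durfeeTerm (m + 1) j =
      q ^ j * durfeeTerm m j + durfeeTerm m (j + 1) := by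
  rw [durfeeTerm, durfeeTerm, durfeeTerm, inv_shiftedZqpoch_eq_mul_inv_succ m j]
  linear_combination -(z ^ j * q ^ ((m + 1) * j + j ^ 2)) * inv_shiftedZqpoch_succ' m j

theorem inv_shiftedZqpoch_eq_sum (m k : ℕ) :
    (shiftedZqpoch m k)⁻¹ = ∑ j ∈ Finset.range (k + 1), gauss k j * durfeeTerm m j := by
  induction k generalizing m with
  | zero =>
    simp [gauss_zero_right, durfeeTerm, shiftedZqpoch_zero_right]
  | succ k ih =>
    rw [inv_shiftedZqpoch_succ', ih (m + 1), Finset.mul_sum]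
    calc ∑ j ∈ Finset.range (k + 1),
          (1 - q ^ (m + 1) * z)⁻¹ * (gauss k j * durfeeTerm (m + 1) j)
        = ∑ j ∈ Finset.range (k + 1),
          gauss k j * (q ^ j * durfeeTerm m j + durfeeTerm m (j + 1)) :=
          Finset.sum_congr rfl fun j _ => by rw [← inv_one_sub_mul_durfeeTerm]; ring
      _ = ∑ j ∈ Finset.range (k + 2), gauss (k + 1) j * durfeeTerm m j :=
          Finset.sum_range_pascal_step (q ^ ·) gauss _ k
            (by rw [pow_zero, one_mul, gauss_zero_right, gauss_zero_right])
            (by rw [gauss_self, gauss_self]) fun j hj => gauss_succ_succ hj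

/-- The enriched (two-variable) Durfee square identity:
`1/(z;q)_k = ∑_{j=0}^k z^j q^{j²} [k choose j]_q 1/(z;q)_j`. -/
theorem enriched_durfee_square_identity (k : ℕ) :
    (zqpoch k)⁻¹ =
      ∑ j ∈ Finset.range (k + 1),
        z ^ j * q ^ (j ^ 2) * gauss k j * (zqpoch j)⁻¹ := by
  rw [← shiftedZqpoch_zero_left, inv_shiftedZqpoch_eq_sum 0 k]
  refine Finset.sum_congr rfl fun j _ => ?_
  rw [durfeeTerm, shiftedZqpoch_zero_left, Nat.zero_mul, Nat.zero_add]
  ring
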